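/- Laufer's algorithm terminates on a negative-definite lattice: let ⟨·,·⟩ be a negative-definite symmetric bilinear form on ℤ^N with basis E_1,…,E_N. Then there is no infinite sequence z₀, z₁, z₂, … with z_{i+1} = z_i + E_{v(i)} where ⟨z_i, E_{v(i)}⟩ > 0 at every step. -/

import Mathlib

/-!
Along a run of the algorithm the coordinate sum of `zᵢ` grows by exactly one per step, while
`⟨zᵢ₊₁, zᵢ₊₁⟩ = ⟨zᵢ, zᵢ⟩ + 2⟨zᵢ, E⟩ + ⟨E, E⟩ > ⟨zᵢ, zᵢ⟩ + ⟨E, E⟩`, so `⟨zᵢ, zᵢ⟩` drops at most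
linearly in `i`. On the other hand the form stays negative definite over `ℝ` (semidefinite by
density of `⋃ₖ k⁻¹ℤᴺ`, and nondegenerate because its determinant is that of the integer form), so
compactness of the unit sphere gives `⟨x, x⟩ ≤ -ε (∑ⱼ xⱼ)²`, which makes `⟨zᵢ, zᵢ⟩` drop
quadratically in `i`.
-/

open Matrix Filter Topology

theorem tendsto_intFloor_natCast_mul_div (a : ℝ) :
    Tendsto (fun k : ℕ => (⌊k * a⌋ : ℝ) / k) atTop (𝓝 a) := by
  have lower : Tendsto (fun k : ℕ => a - 1 / (k : ℝ)) atTop (𝓝 a) := by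
    simpa using tendsto_const_nhds.sub (tendsto_one_div_atTop_nhds_zero_nat (𝕜 := ℝ))
  refine tendsto_of_tendsto_of_tendsto_of_le_of_le' lower tendsto_const_nhds ?_ ?_ <;>
    filter_upwards [eventually_gt_atTop 0] with k hk <;>
    have hk : (0 : ℝ) < k := by exact_mod_cast hk
  · rw [le_div_iff₀ hk, sub_mul, one_div_mul_cancel hk.ne']
    linarith [Int.sub_one_lt_floor ((k : ℝ) * a)]
  · rw [div_le_iff₀ hk, mul_comm]
    exact Int.floor_le _

theorem Int.cast_dotProduct_mulVec {n : Type*} [Fintype n] (A : Matrix n n ℤ) (x y : n → ℤ) :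
    ((x ⬝ᵥ A *ᵥ y : ℤ) : ℝ) = ((↑) ∘ x) ⬝ᵥ A.map (↑) *ᵥ ((↑) ∘ y) := by
  push_cast [dotProduct, mulVec]
  rfl

theorem Matrix.det_ne_zero_of_dotProduct_mulVec_self_ne_zero {n R : Type*} [Fintype n]
    [DecidableEq n] [CommRing R] [IsDomain R] {A : Matrix n n R}
    (hA : ∀ x ≠ 0, x ⬝ᵥ A *ᵥ x ≠ 0) : A.det ≠ 0 := by
  rintro hdet
  obtain ⟨x, hx, hAx⟩ := exists_mulVec_eq_zero_iff.mpr hdet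
  exact hA x hx (by rw [hAx, dotProduct_zero])

theorem Matrix.posSemidef_map_intCast {n : Type*} [Fintype n] {A : Matrix n n ℤ} (hA : A.IsSymm)
    (hnonneg : ∀ x, 0 ≤ x ⬝ᵥ A *ᵥ x) : (A.map (Int.cast : ℤ → ℝ)).PosSemidef := by
  refine .of_dotProduct_mulVec_nonneg (isHermitian_iff_isSymm.mpr (hA.map _)) fun x => ?_
  set q : (n → ℝ) → ℝ := fun x => x ⬝ᵥ A.map (↑) *ᵥ x
  have hq : Continuous q := by simp only [q, dotProduct, mulVec]; fun_prop
  have happrox : Tendsto (fun k : ℕ => fun i => (⌊k * x i⌋ : ℝ) / k) atTop (𝓝 x) :=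
    tendsto_pi_nhds.mpr fun i => tendsto_intFloor_natCast_mul_div (x i)
  refine ge_of_tendsto' ((hq.tendsto x).comp happrox) fun k => ?_
  have hscale : (fun i => (⌊k * x i⌋ : ℝ) / k) = (k : ℝ)⁻¹ • ((↑) ∘ fun i => ⌊k * x i⌋) := by
    funext i; simp [div_eq_inv_mul]
  simp only [Function.comp_apply, q, hscale, smul_dotProduct, mulVec_smul, dotProduct_smul,
    smul_eq_mul, ← Int.cast_dotProduct_mulVec]
  have := hnonneg fun i => ⌊k * x i⌋
  positivity

theorem Matrix.PosDef.exists_pos_mul_norm_sq_le {n : Type*} [Fintype n] {A : Matrix n n ℝ}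
    (hA : A.PosDef) : ∃ ε > 0, ∀ x, ε * ‖x‖ ^ 2 ≤ x ⬝ᵥ A *ᵥ x := by
  set q : (n → ℝ) → ℝ := fun x => x ⬝ᵥ A *ᵥ x
  have hq : Continuous q := by simp only [q, dotProduct, mulVec]; fun_prop
  have hpos : ∀ u ∈ Metric.sphere (0 : n → ℝ) 1, 0 < q u := fun u hu =>
    hA.dotProduct_mulVec_pos (ne_zero_of_mem_unit_sphere ⟨u, hu⟩)
  obtain ⟨ε, hε, hεq⟩ := (isCompact_sphere 0 1).exists_forall_le' hq.continuousOn hpos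
  refine ⟨ε, hε, fun x => ?_⟩
  rcases eq_or_ne x 0 with rfl | hx
  · simp
  have hnx : 0 < ‖x‖ := norm_pos_iff.mpr hx
  have hscale : q x = ‖x‖ ^ 2 * q (‖x‖⁻¹ • x) := by
    simp only [q, mulVec_smul, smul_dotProduct, dotProduct_smul, smul_eq_mul]
    field_simp
  have hunit : ‖x‖⁻¹ • x ∈ Metric.sphere (0 : n → ℝ) 1 := by
    simp [norm_smul, hnx.ne']
  calc ε * ‖x‖ ^ 2 ≤ q (‖x‖⁻¹ • x) * ‖x‖ ^ 2 := by gcongr; exact hεq _ hunit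
    _ = q x := by rw [hscale, mul_comm]

theorem sum_sq_le_card_sq_mul_norm_sq {n : Type*} [Fintype n] (x : n → ℝ) :
    (∑ i, x i) ^ 2 ≤ Fintype.card n ^ 2 * ‖x‖ ^ 2 := by
  rw [← mul_pow, ← sq_abs]
  gcongr
  calc |∑ i, x i| ≤ ∑ i, ‖x i‖ := by simpa using norm_sum_le Finset.univ x
    _ ≤ Fintype.card n • ‖x‖ := Pi.sum_norm_apply_le_norm x
    _ = _ := nsmul_eq_mul _ _

theorem Matrix.posDef_map_intCast {n : Type*} [Fintype n] [DecidableEq n] {A : Matrix n n ℤ}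
    (hA : A.IsSymm) (hpos : ∀ x ≠ 0, 0 < x ⬝ᵥ A *ᵥ x) : (A.map (Int.cast : ℤ → ℝ)).PosDef := by
  have hsemi := posSemidef_map_intCast hA fun x => by
    rcases eq_or_ne x 0 with rfl | hx
    · simp
    · exact (hpos x hx).le
  have hdet : A.det ≠ 0 := det_ne_zero_of_dotProduct_mulVec_self_ne_zero fun x hx => (hpos x hx).ne'
  rw [hsemi.posDef_iff_det_ne_zero, ← Int.cast_det]
  exact_mod_cast hdet

theorem Matrix.exists_pos_mul_sq_sum_le {n : Type*} [Fintype n] [DecidableEq n]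
    {A : Matrix n n ℤ} (hA : A.IsSymm) (hpos : ∀ x ≠ 0, 0 < x ⬝ᵥ A *ᵥ x) :
    ∃ ε > 0, ∀ x : n → ℤ, ε * (∑ i, (x i : ℝ)) ^ 2 ≤ x ⬝ᵥ A *ᵥ x := by
  obtain ⟨ε, hε, hεA⟩ := (posDef_map_intCast hA hpos).exists_pos_mul_norm_sq_le
  refine ⟨ε / (Fintype.card n ^ 2 + 1), by positivity, fun x => ?_⟩
  have hsum := sum_sq_le_card_sq_mul_norm_sq ((↑) ∘ x)
  have hx := hεA ((↑) ∘ x)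
  rw [Int.cast_dotProduct_mulVec]
  simp only [Function.comp_apply] at hsum hx ⊢
  rw [div_mul_eq_mul_div, div_le_iff₀ (by positivity)]
  nlinarith [sq_nonneg ‖((↑) ∘ x : n → ℝ)‖]

theorem Matrix.IsSymm.dotProduct_mulVec_add_single {n R : Type*} [Fintype n] [DecidableEq n]
    [CommRing R] {M : Matrix n n R} (hM : M.IsSymm) (z : n → R) (j : n) :
    (z + Pi.single j 1) ⬝ᵥ M *ᵥ (z + Pi.single j 1)
      = z ⬝ᵥ M *ᵥ z + 2 * (z ⬝ᵥ M *ᵥ Pi.single j 1) + M j j := by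
  have hswap : Pi.single j 1 ⬝ᵥ M *ᵥ z = z ⬝ᵥ M *ᵥ Pi.single j 1 := by
    rw [dotProduct_mulVec, ← mulVec_transpose, hM.eq, dotProduct_comm]
  rw [mulVec_add, add_dotProduct, dotProduct_add, dotProduct_add, hswap, mulVec_single_one,
    single_one_dotProduct, col_apply]
  ring

section Steps

variable {n : Type*} [Fintype n] [DecidableEq n] {z : ℕ → n → ℤ} {v : ℕ → n}

theorem sum_apply_eq_add_of_add_single (hstep : ∀ i, z (i + 1) = z i + Pi.single (v i) 1)
    (k : ℕ) : ∑ j, z k j = ∑ j, z 0 j + k := by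
  induction k with
  | zero => simp
  | succ k ih =>
    simp only [hstep, Pi.add_apply, Finset.sum_add_distrib, ih, Finset.sum_pi_single',
      Finset.mem_univ, if_true]
    push_cast
    ring

theorem dotProduct_mulVec_self_ge_of_add_single {M : Matrix n n ℤ} (hM : M.IsSymm)
    (hstep : ∀ i, z (i + 1) = z i + Pi.single (v i) 1)
    (hpos : ∀ i, 0 < z i ⬝ᵥ M *ᵥ Pi.single (v i) 1) (k : ℕ) :
    z 0 ⬝ᵥ M *ᵥ z 0 - k * ∑ j, |M j j| ≤ z k ⬝ᵥ M *ᵥ z k := by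
  induction k with
  | zero => simp
  | succ k ih =>
    have hdiag : |M (v k) (v k)| ≤ ∑ j, |M j j| :=
      Finset.single_le_sum (fun j _ => abs_nonneg (M j j)) (Finset.mem_univ _)
    rw [hstep, hM.dotProduct_mulVec_add_single]
    push_cast
    linarith [hpos k, neg_abs_le (M (v k) (v k))]

end Steps

theorem not_forall_mul_sq_le_linear {ε : ℝ} (hε : 0 < ε) (s a b : ℝ) :
    ¬ ∀ k : ℕ, ε * (s + k) ^ 2 ≤ a * k + b := by
  intro h
  have hgrow : Tendsto (fun k : ℕ => (k : ℝ) * (ε * k + (2 * ε * s - a)) + (ε * s ^ 2 - b))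
      atTop atTop :=
    tendsto_atTop_add_const_right _ _ <| tendsto_natCast_atTop_atTop.atTop_mul_atTop₀ <|
      tendsto_atTop_add_const_right _ _ <| tendsto_natCast_atTop_atTop.const_mul_atTop hε
  obtain ⟨k, hk⟩ := (hgrow.eventually_gt_atTop 0).exists
  nlinarith [h k]

/-- Laufer's algorithm terminates on a negative-definite lattice: there is no
infinite sequence `z₀, z₁, …` with `z_{i+1} = z_i + E_{v(i)}` and
`⟨z_i, E_{v(i)}⟩ > 0` at every step. -/
theorem laufer_terminates
    (N : ℕ) (M : Matrix (Fin N) (Fin N) ℤ) (hsym : M.IsSymm)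
    (hneg : ∀ x : Fin N → ℤ, x ≠ 0 → x ⬝ᵥ M.mulVec x < 0) :
    ¬ ∃ (z : ℕ → Fin N → ℤ) (v : ℕ → Fin N),
        ∀ i : ℕ, 0 < z i ⬝ᵥ M.mulVec (Pi.single (v i) 1) ∧
          z (i + 1) = z i + Pi.single (v i) 1 := by
  rintro ⟨z, v, hz⟩
  have hstep i := (hz i).2
  obtain ⟨ε, hε, hbound⟩ := exists_pos_mul_sq_sum_le (A := -M) hsym.neg fun x hx => by
    simpa [neg_mulVec] using hneg x hx
  refine not_forall_mul_sq_le_linear hε (∑ j, (z 0 j : ℝ)) (∑ j, |M j j| : ℤ)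
    (-(z 0 ⬝ᵥ M *ᵥ z 0) : ℤ) fun k => ?_
  have hsum : ∑ j, (z k j : ℝ) = ∑ j, (z 0 j : ℝ) + k := by
    exact_mod_cast sum_apply_eq_add_of_add_single hstep k
  have hdrop : ((z 0 ⬝ᵥ M *ᵥ z 0 - k * ∑ j, |M j j| : ℤ) : ℝ) ≤ z k ⬝ᵥ M *ᵥ z k := by
    exact_mod_cast dotProduct_mulVec_self_ge_of_add_single hsym hstep (fun i => (hz i).1) k
  have hk := hbound (z k)
  rw [hsum, neg_mulVec, dotProduct_neg] at hk
  push_cast at hk hdrop ⊢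
  linarith
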